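/- arXiv:2312.11017 — 2 statements merged into one kernel-verified Lean document; each statement's English description precedes it below -/
import Mathlib

section
/- Let X_1, Y_1, X_2, Y_2, X_3, Y_3 be finitely supported random variables on an abelian group G such that X_1 − Y_1 = X_2 − Y_2 =: U almost surely, (X_1,Y_1) → U → (X_2,Y_2) forms a Markov chain, (X_1,Y_1,X_2,Y_2) is independent of (X_3,Y_3), X_1 is independent of Y_1, and X_2 is independent of Y_2. Then H(X_2) + H(Y_1) + H(X_3 + Y_3) ≤ H(X_1 − Y_1) + H(X_3 − Y_1) + H(X_2 − Y_3). -/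
open MeasureTheory ProbabilityTheory Real

/-- Shannon entropy (natural log) of a finitely-valued random variable. -/
noncomputable def ent {Ω S : Type*} [MeasurableSpace Ω] [Fintype S]
    (μ : Measure Ω) (X : Ω → S) : ℝ :=
  ∑ s : S, Real.negMulLog ((μ (X ⁻¹' {s})).toReal)

/-!
Put `U = X₁ - Y₁`, `V₁ = X₃ - Y₁`, `V₂ = X₂ - Y₃` and `W = X₃ + Y₃`. The independence assumptions
and the Markov chain evaluate the joint entropy of all six variables exactly:
`H(X₁, Y₁, X₂, Y₂, X₃, Y₃) = H(X₁) + H(Y₁) + H(X₂) + H(Y₂) - H(U) + H(X₃, Y₃)`.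
Since `X₂ = U + Y₂`, the six variables are in bijection with `(X₁, Y₂, Y₁, V₁, W)`, and two uses of
submodularity (conditioning on `(V₁, W)`, then on `W`) bound the same joint entropy by
`H(X₁, Y₂, V₁, W) + H(X₃, Y₃) - H(W)`. Finally `(X₁, Y₂, V₁, W)` is in bijection with
`(X₁, Y₂, V₁, V₂)`, whose entropy is at most `H(X₁) + H(Y₂) + H(V₁) + H(V₂)`.
-/

open Function

lemma preimage_prodMk_singleton {Ω S T : Type*} (X : Ω → S) (Y : Ω → T) (s : S) (t : T) :
    (fun ω => (X ω, Y ω)) ⁻¹' {(s, t)} = X ⁻¹' {s} ∩ Y ⁻¹' {t} := by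
  rw [← Set.singleton_prod_singleton, Set.mk_preimage_prod]

lemma sum_mul_log_div_le_sub {ι : Type*} [Fintype ι] {p q : ι → ℝ} (hp : ∀ i, 0 ≤ p i)
    (hq : ∀ i, 0 ≤ q i) (hpq : ∀ i, 0 < p i → 0 < q i) :
    ∑ i, p i * log (q i / p i) ≤ ∑ i, q i - ∑ i, p i := by
  rw [← Finset.sum_sub_distrib]
  refine Finset.sum_le_sum fun i _ => ?_
  rcases (hp i).eq_or_lt with h0 | hpi
  · simpa [← h0] using hq i
  calc p i * log (q i / p i) ≤ p i * (q i / p i - 1) :=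
        mul_le_mul_of_nonneg_left (log_le_sub_one_of_pos (div_pos (hpq i hpi) hpi)) hpi.le
    _ = q i - p i := by field_simp

lemma sum_mul_div_eq_sum {A B C : Type*} [Fintype A] [Fintype B] [Fintype C]
    (f : A × C → ℝ) (g : B × C → ℝ) (h : C → ℝ)
    (hf : ∀ c, ∑ a, f (a, c) = h c) (hg : ∀ c, ∑ b, g (b, c) = h c) :
    ∑ d : A × B × C, f (d.1, d.2.2) * g d.2 / h d.2.2 = ∑ c, h c := by
  calc ∑ d : A × B × C, f (d.1, d.2.2) * g d.2 / h d.2.2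
      = ∑ c, (∑ a, f (a, c)) * (∑ b, g (b, c)) / h c := by
        simp only [Fintype.sum_prod_type, Finset.sum_mul_sum, Finset.sum_div]
        exact (Finset.sum_congr rfl fun _ _ => Finset.sum_comm).trans Finset.sum_comm
    _ = ∑ c, h c := by simp only [hf, hg, mul_self_div_self]

section Entropy

variable {Ω A B C : Type*} [MeasurableSpace Ω] {μ : Measure Ω}

lemma ent_congr_ae [Fintype A] {X Y : Ω → A} (h : X =ᵐ[μ] Y) : ent μ X = ent μ Y := by
  unfold ent
  congr! 3 with s
  exact measure_congr (h.preimage {s})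

lemma ent_comp_of_injective [Fintype A] [Fintype B] {f : A → B} (hf : Injective f)
    (X : Ω → A) : ent μ (fun ω => f (X ω)) = ent μ X := by
  refine (Fintype.sum_of_injective f hf _ _ (fun t ht => ?_) (fun s => ?_)).symm
  · have : (fun ω => f (X ω)) ⁻¹' {t} = ∅ :=
      Set.eq_empty_of_forall_notMem fun ω hω => ht ⟨X ω, hω⟩
    simp [this]
  · have : (fun ω => f (X ω)) ⁻¹' {f s} = X ⁻¹' {s} := by ext; simp [hf.eq_iff]
    rw [this]

lemma ent_eq_of_ae_eq_comp [Fintype A] [Fintype B] {f : A → B} (hf : Injective f)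
    {X : Ω → A} {Y : Ω → B} (h : ∀ᵐ ω ∂μ, Y ω = f (X ω)) : ent μ Y = ent μ X :=
  (ent_congr_ae h).trans (ent_comp_of_injective hf X)

lemma ent_const [IsProbabilityMeasure μ] [Fintype A] (c : A) : ent μ (fun _ : Ω => c) = 0 := by
  classical
  simp [ent, Set.preimage_const, apply_ite]

section FiniteMeasure

variable [IsFiniteMeasure μ]

lemma measureReal_preimage_le_comp (X : Ω → A) (f : A → B) (s : A) :
    μ.real (X ⁻¹' {s}) ≤ μ.real ((fun ω => f (X ω)) ⁻¹' {f s}) :=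
  measureReal_mono fun ω (h : X ω = s) => by simp [h]

variable [MeasurableSpace A] [MeasurableSingletonClass A]

lemma sum_measureReal_preimage_inter [Fintype A] {X : Ω → A} (hX : Measurable X) (E : Set Ω) :
    ∑ s, μ.real (X ⁻¹' {s} ∩ E) = μ.real E := by
  have h := sum_measureReal_preimage_singleton (μ := μ.restrict E) Finset.univ
    (fun s _ => hX (measurableSet_singleton s))
  simpa [measureReal_restrict_apply (hX (measurableSet_singleton _))] using h

lemma sum_measureReal_preimage_singleton_eq_univ [Fintype A] {X : Ω → A} (hX : Measurable X) :
    ∑ s, μ.real (X ⁻¹' {s}) = μ.real Set.univ := by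
  simpa using sum_measureReal_preimage_inter (μ := μ) hX Set.univ

lemma measureReal_comp_preimage_singleton [Fintype A] [DecidableEq B] {X : Ω → A}
    (hX : Measurable X) (f : A → B) (t : B) :
    μ.real ((fun ω => f (X ω)) ⁻¹' {t}) = ∑ s with f s = t, μ.real (X ⁻¹' {s}) := by
  rw [sum_measureReal_preimage_singleton _ fun s _ => hX (measurableSet_singleton s)]
  congr 1; ext; simp

lemma ent_comp_eq_neg_sum [Fintype A] [Fintype B] {X : Ω → A} (hX : Measurable X)
    (f : A → B) :
    ent μ (fun ω => f (X ω))
      = -∑ s, μ.real (X ⁻¹' {s}) * log (μ.real ((fun ω => f (X ω)) ⁻¹' {f s})) := by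
  classical
  rw [← Finset.sum_fiberwise Finset.univ f]
  simp only [ent, negMulLog, neg_mul, Finset.sum_neg_distrib, neg_inj]
  refine Finset.sum_congr rfl fun t _ => ?_
  rw [← measureReal_def]
  nth_rw 1 [measureReal_comp_preimage_singleton hX f t]
  rw [Finset.sum_mul]
  refine Finset.sum_congr rfl fun s hs => ?_
  rw [(Finset.mem_filter.1 hs).2]

variable [MeasurableSpace B] [MeasurableSingletonClass B] [MeasurableSpace C]
  [MeasurableSingletonClass C] [Fintype A] [Fintype B] [Fintype C]

lemma ent_submodular {X : Ω → A} {Y : Ω → B} {Z : Ω → C} (hX : Measurable X)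
    (hY : Measurable Y) (hZ : Measurable Z) :
    ent μ (fun ω => (X ω, Y ω, Z ω)) + ent μ Z
      ≤ ent μ (fun ω => (X ω, Z ω)) + ent μ (fun ω => (Y ω, Z ω)) := by
  set W := fun ω => (X ω, Y ω, Z ω)
  set p := fun d => μ.real (W ⁻¹' {d})
  set pXZ := fun e => μ.real ((fun ω => (X ω, Z ω)) ⁻¹' {e})
  set pYZ := fun e => μ.real ((fun ω => (Y ω, Z ω)) ⁻¹' {e})
  set pZ := fun c => μ.real (Z ⁻¹' {c})
  have hW : Measurable W := hX.prodMk (hY.prodMk hZ)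
  have eW : ent μ W = -∑ d, p d * log (p d) := ent_comp_eq_neg_sum hW fun d => d
  have eZ : ent μ Z = -∑ d, p d * log (pZ d.2.2) := ent_comp_eq_neg_sum hW fun d => d.2.2
  have eXZ : ent μ (fun ω => (X ω, Z ω)) = -∑ d, p d * log (pXZ (d.1, d.2.2)) :=
    ent_comp_eq_neg_sum hW fun d => (d.1, d.2.2)
  have eYZ : ent μ (fun ω => (Y ω, Z ω)) = -∑ d, p d * log (pYZ d.2) :=
    ent_comp_eq_neg_sum hW fun d => d.2
  -- Gibbs' inequality against `q = p(x,z) p(y,z) / p(z)`, which has the same total mass as `p`.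
  set q := fun d : A × B × C => pXZ (d.1, d.2.2) * pYZ d.2 / pZ d.2.2
  have hpXZ (d) : p d ≤ pXZ (d.1, d.2.2) :=
    measureReal_preimage_le_comp W (fun d => (d.1, d.2.2)) d
  have hpYZ (d) : p d ≤ pYZ d.2 := measureReal_preimage_le_comp W (fun d => d.2) d
  have hpZ (d) : p d ≤ pZ d.2.2 := measureReal_preimage_le_comp W (fun d => d.2.2) d
  have hlog (d) : p d * log (q d / p d)
      = p d * log (pXZ (d.1, d.2.2)) + p d * log (pYZ d.2) - p d * log (p d)
        - p d * log (pZ d.2.2) := by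
    have hp0 : 0 ≤ p d := measureReal_nonneg
    rcases hp0.eq_or_lt with h0 | hp
    · rw [← h0]; ring
    have hxz := hp.trans_le (hpXZ d)
    have hyz := hp.trans_le (hpYZ d)
    have hz := hp.trans_le (hpZ d)
    rw [log_div (by positivity) hp.ne', log_div (mul_pos hxz hyz).ne' hz.ne',
      log_mul hxz.ne' hyz.ne']
    ring
  have hmass : ∑ d, q d = ∑ d, p d := by
    rw [sum_mul_div_eq_sum pXZ pYZ pZ _ _, sum_measureReal_preimage_singleton_eq_univ hW,
      sum_measureReal_preimage_singleton_eq_univ hZ]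
    all_goals intro c; simp only [pXZ, pYZ, pZ, preimage_prodMk_singleton]
    exacts [sum_measureReal_preimage_inter hX _, sum_measureReal_preimage_inter hY _]
  have key := sum_mul_log_div_le_sub (p := p) (q := q) (fun _ => measureReal_nonneg)
    (fun _ => by positivity) fun d hp =>
      div_pos (mul_pos (hp.trans_le (hpXZ d)) (hp.trans_le (hpYZ d))) (hp.trans_le (hpZ d))
  simp only [hlog, Finset.sum_sub_distrib, Finset.sum_add_distrib, hmass, sub_self] at key
  rw [eW, eZ, eXZ, eYZ]
  linarith

lemma ent_add_ent_eq_of_markovChain {P : Ω → A} {U : Ω → B} {Q : Ω → C} (hP : Measurable P)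
    (hU : Measurable U) (hQ : Measurable Q)
    (h : ∀ a b c, μ (P ⁻¹' {a} ∩ U ⁻¹' {b} ∩ Q ⁻¹' {c}) * μ (U ⁻¹' {b})
      = μ (P ⁻¹' {a} ∩ U ⁻¹' {b}) * μ (U ⁻¹' {b} ∩ Q ⁻¹' {c})) :
    ent μ (fun ω => (P ω, U ω, Q ω)) + ent μ U
      = ent μ (fun ω => (P ω, U ω)) + ent μ (fun ω => (U ω, Q ω)) := by
  set W := fun ω => (P ω, U ω, Q ω)
  set p := fun d => μ.real (W ⁻¹' {d})
  set pPU := fun e => μ.real ((fun ω => (P ω, U ω)) ⁻¹' {e})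
  set pUQ := fun e => μ.real ((fun ω => (U ω, Q ω)) ⁻¹' {e})
  set pU := fun b => μ.real (U ⁻¹' {b})
  have hW : Measurable W := hP.prodMk (hU.prodMk hQ)
  have eW : ent μ W = -∑ d, p d * log (p d) := ent_comp_eq_neg_sum hW fun d => d
  have eU : ent μ U = -∑ d, p d * log (pU d.2.1) := ent_comp_eq_neg_sum hW fun d => d.2.1
  have ePU : ent μ (fun ω => (P ω, U ω)) = -∑ d, p d * log (pPU (d.1, d.2.1)) :=
    ent_comp_eq_neg_sum hW fun d => (d.1, d.2.1)
  have eUQ : ent μ (fun ω => (U ω, Q ω)) = -∑ d, p d * log (pUQ d.2) :=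
    ent_comp_eq_neg_sum hW fun d => d.2
  have hfac (d : A × B × C) : p d * pU d.2.1 = pPU (d.1, d.2.1) * pUQ d.2 := by
    obtain ⟨a, b, c⟩ := d
    simp only [p, pU, pPU, pUQ, W, preimage_prodMk_singleton, measureReal_def, ← Set.inter_assoc,
      ← ENNReal.toReal_mul, h]
  rw [eW, eU, ePU, eUQ, ← neg_add, ← neg_add, ← Finset.sum_add_distrib,
    ← Finset.sum_add_distrib]
  congr 1
  refine Finset.sum_congr rfl fun d _ => ?_
  have hp0 : 0 ≤ p d := measureReal_nonneg
  rcases hp0.eq_or_lt with h0 | hp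
  · rw [← h0]; ring
  have hpU : 0 < pU d.2.1 := hp.trans_le (measureReal_preimage_le_comp W (fun d => d.2.1) d)
  have hprod : pPU (d.1, d.2.1) * pUQ d.2 ≠ 0 := hfac d ▸ (mul_pos hp hpU).ne'
  have hlog := congrArg log (hfac d)
  rw [log_mul hp.ne' hpU.ne', log_mul (left_ne_zero_of_mul hprod) (right_ne_zero_of_mul hprod)]
    at hlog
  rw [← mul_add, ← mul_add, hlog]

end FiniteMeasure

section ProbabilityMeasure

variable [IsProbabilityMeasure μ] [MeasurableSpace A] [MeasurableSingletonClass A]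
  [MeasurableSpace B] [MeasurableSingletonClass B] [Fintype A] [Fintype B]

lemma ent_pair_le {X : Ω → A} {Y : Ω → B} (hX : Measurable X) (hY : Measurable Y) :
    ent μ (fun ω => (X ω, Y ω)) ≤ ent μ X + ent μ Y := by
  have h := ent_submodular (μ := μ) hX hY (measurable_const (a := ()))
  have eXY : ent μ (fun ω => (X ω, Y ω, ())) = ent μ (fun ω => (X ω, Y ω)) :=
    ent_comp_of_injective (f := fun d : A × B => (d.1, d.2, ()))
      (LeftInverse.injective (g := fun e => (e.1, e.2.1)) fun _ => rfl) (fun ω => (X ω, Y ω))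
  have eX : ent μ (fun ω => (X ω, ())) = ent μ X :=
    ent_comp_of_injective (f := fun a : A => (a, ()))
      (LeftInverse.injective (g := Prod.fst) fun _ => rfl) X
  have eY : ent μ (fun ω => (Y ω, ())) = ent μ Y :=
    ent_comp_of_injective (f := fun b : B => (b, ()))
      (LeftInverse.injective (g := Prod.fst) fun _ => rfl) Y
  rwa [eXY, eX, eY, ent_const, add_zero] at h

lemma ent_pair_eq_add_of_indepFun {X : Ω → A} {Y : Ω → B} (hX : Measurable X)
    (hY : Measurable Y) (h : IndepFun X Y μ) :
    ent μ (fun ω => (X ω, Y ω)) = ent μ X + ent μ Y := by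
  have hfac (a : A) (b : B) : μ.real ((fun ω => (X ω, Y ω)) ⁻¹' {(a, b)})
      = μ.real (X ⁻¹' {a}) * μ.real (Y ⁻¹' {b}) := by
    rw [preimage_prodMk_singleton, measureReal_def, h.measure_inter_preimage_eq_mul _ _
      (measurableSet_singleton a) (measurableSet_singleton b), ENNReal.toReal_mul]
    rfl
  simp only [ent, ← measureReal_def, Fintype.sum_prod_type, hfac, negMulLog_mul,
    Finset.sum_add_distrib, ← Finset.sum_mul, ← Finset.mul_sum]
  simp only [sum_measureReal_preimage_singleton_eq_univ hX,
    sum_measureReal_preimage_singleton_eq_univ hY, probReal_univ, one_mul]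

end ProbabilityMeasure

end Entropy

section AddCommGroup

variable {Ω G : Type*} [MeasurableSpace Ω] {μ : Measure Ω} [IsProbabilityMeasure μ]
  [AddCommGroup G] [Fintype G] [MeasurableSpace G] [MeasurableSingletonClass G]
  {X₁ Y₁ X₂ Y₂ X₃ Y₃ : Ω → G}

lemma ent_quadruple_add_ent_sub_of_markovChain (hX₁ : Measurable X₁) (hY₁ : Measurable Y₁)
    (hX₂ : Measurable X₂) (hY₂ : Measurable Y₂)
    (heq : ∀ᵐ ω ∂μ, X₁ ω - Y₁ ω = X₂ ω - Y₂ ω)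
    (hMC : ∀ (p q : G × G) (u : G),
      μ ((fun ω => (X₁ ω, Y₁ ω)) ⁻¹' {p} ∩ (fun ω => X₁ ω - Y₁ ω) ⁻¹' {u} ∩
          (fun ω => (X₂ ω, Y₂ ω)) ⁻¹' {q})
        * μ ((fun ω => X₁ ω - Y₁ ω) ⁻¹' {u})
      = μ ((fun ω => (X₁ ω, Y₁ ω)) ⁻¹' {p} ∩ (fun ω => X₁ ω - Y₁ ω) ⁻¹' {u})
        * μ ((fun ω => X₁ ω - Y₁ ω) ⁻¹' {u} ∩ (fun ω => (X₂ ω, Y₂ ω)) ⁻¹' {q}))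
    (hind₁ : IndepFun X₁ Y₁ μ) (hind₂ : IndepFun X₂ Y₂ μ) :
    ent μ (fun ω => (X₁ ω, Y₁ ω, X₂ ω, Y₂ ω)) + ent μ (fun ω => X₁ ω - Y₁ ω)
      = ent μ X₁ + ent μ Y₁ + ent μ X₂ + ent μ Y₂ := by
  have hchain := ent_add_ent_eq_of_markovChain (hX₁.prodMk hY₁)
    (U := fun ω => X₁ ω - Y₁ ω) (by fun_prop) (hX₂.prodMk hY₂) fun p u q => hMC p q u
  have eW : ent μ (fun ω => ((X₁ ω, Y₁ ω), X₁ ω - Y₁ ω, (X₂ ω, Y₂ ω)))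
      = ent μ (fun ω => (X₁ ω, Y₁ ω, X₂ ω, Y₂ ω)) :=
    ent_comp_of_injective (f := fun t : G × G × G × G => ((t.1, t.2.1), t.1 - t.2.1, t.2.2))
      (LeftInverse.injective (g := fun e => (e.1.1, e.1.2, e.2.2)) fun _ => rfl)
      fun ω => (X₁ ω, Y₁ ω, X₂ ω, Y₂ ω)
  have eP : ent μ (fun ω => ((X₁ ω, Y₁ ω), X₁ ω - Y₁ ω)) = ent μ (fun ω => (X₁ ω, Y₁ ω)) :=
    ent_comp_of_injective (f := fun p : G × G => (p, p.1 - p.2))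
      (LeftInverse.injective (g := Prod.fst) fun _ => rfl) fun ω => (X₁ ω, Y₁ ω)
  have eQ : ent μ (fun ω => (X₁ ω - Y₁ ω, (X₂ ω, Y₂ ω))) = ent μ (fun ω => (X₂ ω, Y₂ ω)) :=
    ent_eq_of_ae_eq_comp (f := fun p : G × G => (p.1 - p.2, p))
      (LeftInverse.injective (g := Prod.snd) fun _ => rfl) (heq.mono fun ω h => by simp [h])
  rw [eW, eP, eQ, ent_pair_eq_add_of_indepFun hX₁ hY₁ hind₁,
    ent_pair_eq_add_of_indepFun hX₂ hY₂ hind₂] at hchain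
  linarith

lemma ent_sextuple_add_ent_add_le (hX₁ : Measurable X₁) (hY₁ : Measurable Y₁)
    (hX₂ : Measurable X₂) (hY₂ : Measurable Y₂) (hX₃ : Measurable X₃) (hY₃ : Measurable Y₃)
    (heq : ∀ᵐ ω ∂μ, X₁ ω - Y₁ ω = X₂ ω - Y₂ ω) :
    ent μ (fun ω => ((X₁ ω, Y₁ ω, X₂ ω, Y₂ ω), (X₃ ω, Y₃ ω))) + ent μ (fun ω => X₃ ω + Y₃ ω)
      ≤ ent μ X₁ + ent μ Y₂ + ent μ (fun ω => X₃ ω - Y₁ ω) + ent μ (fun ω => X₂ ω - Y₃ ω)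
        + ent μ (fun ω => (X₃ ω, Y₃ ω)) := by
  set V₁ := fun ω => X₃ ω - Y₁ ω
  set V₂ := fun ω => X₂ ω - Y₃ ω
  set W := fun ω => X₃ ω + Y₃ ω
  have hV₁ : Measurable V₁ := by fun_prop
  have hV₂ : Measurable V₂ := by fun_prop
  have hW : Measurable W := by fun_prop
  have hX₂_eq : ∀ᵐ ω ∂μ, X₂ ω = X₁ ω - Y₁ ω + Y₂ ω := heq.mono fun ω h => by rw [h]; abel
  have eJoint : ent μ (fun ω => ((X₁ ω, Y₁ ω, X₂ ω, Y₂ ω), (X₃ ω, Y₃ ω)))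
      = ent μ (fun ω => ((X₁ ω, Y₂ ω), Y₁ ω, (V₁ ω, W ω))) :=
    ent_eq_of_ae_eq_comp
      (f := fun t : (G × G) × G × G × G =>
        ((t.1.1, t.2.1, t.1.1 - t.2.1 + t.1.2, t.1.2),
          (t.2.2.1 + t.2.1, t.2.2.2 - t.2.2.1 - t.2.1)))
      (LeftInverse.injective
        (g := fun e => ((e.1.1, e.1.2.2.2), e.1.2.1, (e.2.1 - e.1.2.1, e.2.1 + e.2.2)))
        fun _ => by simp)
      (hX₂_eq.mono fun ω h => by simp [V₁, W, h])
  have hSplit := ent_submodular (μ := μ) (hX₁.prodMk hY₂) hY₁ (hV₁.prodMk hW)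
  have eY₁ : ent μ (fun ω => (Y₁ ω, V₁ ω, W ω)) = ent μ (fun ω => (X₃ ω, V₁ ω, W ω)) :=
    ent_eq_of_ae_eq_comp (f := fun t : G × G × G => (t.1 - t.2.1, t.2))
      (LeftInverse.injective (g := fun e => (e.1 + e.2.1, e.2)) fun _ => by simp)
      (.of_forall fun ω => by simp [V₁])
  have hCond := ent_submodular (μ := μ) hX₃ hV₁ hW
  have eX₃W : ent μ (fun ω => (X₃ ω, W ω)) = ent μ (fun ω => (X₃ ω, Y₃ ω)) :=
    ent_comp_of_injective (f := fun t : G × G => (t.1, t.1 + t.2))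
      (LeftInverse.injective (g := fun e => (e.1, e.2 - e.1)) fun _ => by simp)
      fun ω => (X₃ ω, Y₃ ω)
  have eV₂ : ent μ (fun ω => ((X₁ ω, Y₂ ω), (V₁ ω, W ω)))
      = ent μ (fun ω => (X₁ ω, Y₂ ω, V₁ ω, V₂ ω)) :=
    ent_eq_of_ae_eq_comp
      (f := fun t : G × G × G × G => ((t.1, t.2.1), (t.2.2.1, t.1 + t.2.1 + t.2.2.1 - t.2.2.2)))
      (LeftInverse.injective
        (g := fun e => (e.1.1, e.1.2, e.2.1, e.1.1 + e.1.2 + e.2.1 - e.2.2)) fun _ => by simp)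
      (hX₂_eq.mono fun ω h => by simp only [V₁, V₂, W, h, Prod.mk.injEq, true_and]; abel)
  have h₁ := ent_pair_le (μ := μ) hX₁ (hY₂.prodMk (hV₁.prodMk hV₂))
  have h₂ := ent_pair_le (μ := μ) hY₂ (hV₁.prodMk hV₂)
  have h₃ := ent_pair_le (μ := μ) hV₁ hV₂
  linarith

end AddCommGroup

theorem stmt12 {Ω G : Type*} [MeasurableSpace Ω] [AddCommGroup G] [Fintype G]
    [MeasurableSpace G] [MeasurableSingletonClass G]
    (μ : Measure Ω) [IsProbabilityMeasure μ]
    (X₁ Y₁ X₂ Y₂ X₃ Y₃ : Ω → G)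
    (hX₁ : Measurable X₁) (hY₁ : Measurable Y₁) (hX₂ : Measurable X₂)
    (hY₂ : Measurable Y₂) (hX₃ : Measurable X₃) (hY₃ : Measurable Y₃)
    (heq : ∀ᵐ ω ∂μ, X₁ ω - Y₁ ω = X₂ ω - Y₂ ω)
    (hMC : ∀ (p q : G × G) (u : G),
      μ ((fun ω => (X₁ ω, Y₁ ω)) ⁻¹' {p} ∩ (fun ω => X₁ ω - Y₁ ω) ⁻¹' {u} ∩
          (fun ω => (X₂ ω, Y₂ ω)) ⁻¹' {q})
        * μ ((fun ω => X₁ ω - Y₁ ω) ⁻¹' {u})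
      = μ ((fun ω => (X₁ ω, Y₁ ω)) ⁻¹' {p} ∩ (fun ω => X₁ ω - Y₁ ω) ⁻¹' {u})
        * μ ((fun ω => X₁ ω - Y₁ ω) ⁻¹' {u} ∩ (fun ω => (X₂ ω, Y₂ ω)) ⁻¹' {q}))
    (hind : IndepFun (fun ω => (X₁ ω, Y₁ ω, X₂ ω, Y₂ ω)) (fun ω => (X₃ ω, Y₃ ω)) μ)
    (hind₁ : IndepFun X₁ Y₁ μ) (hind₂ : IndepFun X₂ Y₂ μ) :
    ent μ X₂ + ent μ Y₁ + ent μ (fun ω => X₃ ω + Y₃ ω)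
      ≤ ent μ (fun ω => X₁ ω - Y₁ ω) + ent μ (fun ω => X₃ ω - Y₁ ω)
        + ent μ (fun ω => X₂ ω - Y₃ ω) := by
  have hJoint := ent_pair_eq_add_of_indepFun (hX₁.prodMk (hY₁.prodMk (hX₂.prodMk hY₂)))
    (hX₃.prodMk hY₃) hind
  have hMarkov := ent_quadruple_add_ent_sub_of_markovChain hX₁ hY₁ hX₂ hY₂ heq hMC hind₁ hind₂
  have hUpper := ent_sextuple_add_ent_add_le hX₁ hY₁ hX₂ hY₂ hX₃ hY₃ heq (μ := μ)
  linarith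
end

section
/- Let G ⊆ A × B be a finite bipartite graph with no isolated vertices. Then min over input distributions P_X of max over channels W consistent with G of (H(Y) − H(X)) is at most log μ_{A→B}(G). -/
/-!
Let `S` attain the minimum in `μ_{A→B}(G)` and feed the channel the uniform input on `S`, so
`H(X) = log |S|`. Whatever channel consistent with `G` is used, the output is supported on `N(S)`,
hence `H(Y) ≤ log |N(S)|` by the maximum-entropy bound, and `H(Y) - H(X) ≤ log (|N(S)| / |S|)`.
-/

open Real

variable {A B : Type*} [Fintype A] [Fintype B] [DecidableEq A] [DecidableEq B]

/-- The neighborhood of `S ⊆ A` in the bipartite graph `E ⊆ A × B`. -/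
def nbhd (E : Finset (A × B)) (S : Finset A) : Finset B :=
  (E.filter (fun p => p.1 ∈ S)).image Prod.snd

/-- The magnification ratio `μ_{A→B}(E) = min_{∅ ≠ S ⊆ A} |N(S)|/|S|`. -/
noncomputable def magRatio (E : Finset (A × B)) : ℝ :=
  sInf {r : ℝ | ∃ S : Finset A, S.Nonempty ∧ r = (nbhd E S).card / S.card}

/-- `p` is a probability distribution on `A`. -/
def IsDist (p : A → ℝ) : Prop := (∀ a, 0 ≤ p a) ∧ ∑ a, p a = 1

/-- `W` is a channel from `A` to `B` consistent with the bipartite graph `E`. -/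
def IsChannel (E : Finset (A × B)) (W : A → B → ℝ) : Prop :=
  (∀ a b, 0 ≤ W a b) ∧ (∀ a, ∑ b, W a b = 1) ∧ ∀ a b, (a, b) ∉ E → W a b = 0

/-- Output distribution of channel `W` with input distribution `p`. -/
def outDist (p : A → ℝ) (W : A → B → ℝ) (b : B) : ℝ := ∑ a, p a * W a b

/-- Shannon entropy (natural log) of a distribution on a finite type. -/
noncomputable def entDist {S : Type*} [Fintype S] (q : S → ℝ) : ℝ :=
  ∑ s : S, Real.negMulLog (q s)

open Finset

section Entropy

variable {S : Type*} [Fintype S] {q : S → ℝ}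

lemma IsDist.le_one (hq : IsDist q) (s : S) : q s ≤ 1 :=
  hq.2 ▸ single_le_sum (fun t _ => hq.1 t) (mem_univ s)

lemma IsDist.entDist_nonneg (hq : IsDist q) : 0 ≤ entDist q :=
  sum_nonneg fun s _ => negMulLog_nonneg (hq.1 s) (hq.le_one s)

/-- Jensen's inequality for the concave `negMulLog`, with uniform weights on `T`. -/
lemma entDist_le_log_card_of_support {T : Finset S} (hT : T.Nonempty) (hq : ∀ s, 0 ≤ q s)
    (hsupp : ∀ s ∉ T, q s = 0) (hsum : ∑ s ∈ T, q s = 1) : entDist q ≤ log #T := by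
  have hn : (0 : ℝ) < #T := Nat.cast_pos.2 hT.card_pos
  have hjensen := concaveOn_negMulLog.le_map_sum (t := T) (w := fun _ => (#T : ℝ)⁻¹) (p := q)
    (fun _ _ => by positivity) (by simp [hn.ne']) (fun s _ => hq s)
  have hunif : negMulLog (#T : ℝ)⁻¹ = (#T : ℝ)⁻¹ * log #T := by simp [negMulLog, log_inv]
  simp only [smul_eq_mul, ← mul_sum, hsum, mul_one, hunif] at hjensen
  rw [entDist, ← sum_subset (subset_univ T) fun s _ hs => by simp [hsupp s hs]]
  exact le_of_mul_le_mul_left hjensen (inv_pos.2 hn)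

lemma IsDist.entDist_le_log_card (hq : IsDist q) : entDist q ≤ log (Fintype.card S) := by
  have hS : (univ : Finset S).Nonempty := by
    by_contra h
    simpa [not_nonempty_iff_eq_empty.1 h] using hq.2
  simpa using entDist_le_log_card_of_support hS hq.1 (by simp) hq.2

end Entropy

section Uniform

variable {α : Type*} [DecidableEq α] {S : Finset α}

noncomputable def uniformDist (S : Finset α) (a : α) : ℝ := if a ∈ S then (#S : ℝ)⁻¹ else 0

variable [Fintype α]

lemma isDist_uniformDist (hS : S.Nonempty) : IsDist (uniformDist S) := by
  have hn : (#S : ℝ) ≠ 0 := Nat.cast_ne_zero.2 hS.card_ne_zero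
  refine ⟨fun a => by unfold uniformDist; positivity, ?_⟩
  simp [uniformDist, hn]

lemma entDist_uniformDist (hS : S.Nonempty) : entDist (uniformDist S) = log #S := by
  have hn : (#S : ℝ) ≠ 0 := Nat.cast_ne_zero.2 hS.card_ne_zero
  simp only [entDist, uniformDist, apply_ite negMulLog, negMulLog_zero, sum_ite_mem, univ_inter,
    sum_const, nsmul_eq_mul]
  simp [negMulLog, log_inv, hn]

end Uniform

section Channel

variable {α β : Type*} {E : Finset (α × β)} {S : Finset α}

lemma mem_nbhd [DecidableEq α] [DecidableEq β] {b : β} :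
    b ∈ nbhd E S ↔ ∃ a ∈ S, (a, b) ∈ E := by
  simp [nbhd, and_comm]

lemma nbhd_nonempty [DecidableEq α] [DecidableEq β] (hE : ∀ a, ∃ b, (a, b) ∈ E)
    (hS : S.Nonempty) : (nbhd E S).Nonempty := by
  obtain ⟨a, ha⟩ := hS
  obtain ⟨b, hb⟩ := hE a
  exact ⟨b, mem_nbhd.2 ⟨a, ha, hb⟩⟩

lemma exists_isChannel [Fintype β] [DecidableEq β] (hE : ∀ a, ∃ b, (a, b) ∈ E) :
    ∃ W, IsChannel E W := by
  choose f hf using hE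
  refine ⟨fun a b => if b = f a then 1 else 0, fun a b => by positivity, fun a => by simp, ?_⟩
  rintro a b hab
  simp only [ite_eq_right_iff, one_ne_zero, imp_false]
  rintro rfl
  exact hab (hf a)

variable [Fintype α] [Fintype β] {p : α → ℝ} {W : α → β → ℝ}

lemma IsDist.outDist (hp : IsDist p) (hW : IsChannel E W) : IsDist (outDist p W) := by
  refine ⟨fun b => sum_nonneg fun a _ => mul_nonneg (hp.1 a) (hW.1 a b), ?_⟩
  simp only [_root_.outDist, sum_comm (γ := β), ← mul_sum, hW.2.1, mul_one, hp.2]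

lemma outDist_eq_zero_of_notMem_nbhd [DecidableEq α] [DecidableEq β] (hW : IsChannel E W)
    (hp : ∀ a ∉ S, p a = 0) {b : β} (hb : b ∉ nbhd E S) : outDist p W b = 0 := by
  refine sum_eq_zero fun a _ => ?_
  by_cases ha : a ∈ S
  · rw [hW.2.2 a b fun hab => hb (mem_nbhd.2 ⟨a, ha, hab⟩), mul_zero]
  · rw [hp a ha, zero_mul]

end Channel

section Gain

variable {α β : Type*} [Fintype α] [Fintype β] {E : Finset (α × β)} {p : α → ℝ}

def entropyGains (E : Finset (α × β)) (p : α → ℝ) : Set ℝ :=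
  {s | ∃ W, IsChannel E W ∧ s = entDist (outDist p W) - entDist p}

lemma entropyGains_nonempty [DecidableEq β] (hE : ∀ a, ∃ b, (a, b) ∈ E) :
    (entropyGains E p).Nonempty :=
  let ⟨W, hW⟩ := exists_isChannel hE
  ⟨_, W, hW, rfl⟩

lemma bddAbove_entropyGains (hp : IsDist p) : BddAbove (entropyGains E p) := by
  refine ⟨log (Fintype.card β), ?_⟩
  rintro _ ⟨W, hW, rfl⟩
  linarith [(hp.outDist hW).entDist_le_log_card, hp.entDist_nonneg]

lemma neg_log_card_le_sSup_entropyGains [DecidableEq β] (hE : ∀ a, ∃ b, (a, b) ∈ E)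
    (hp : IsDist p) : -log (Fintype.card α) ≤ sSup (entropyGains E p) := by
  obtain ⟨W, hW⟩ := exists_isChannel hE
  refine le_csSup_of_le (bddAbove_entropyGains hp) ⟨W, hW, rfl⟩ ?_
  linarith [(hp.outDist hW).entDist_nonneg, hp.entDist_le_log_card]

lemma sSup_entropyGains_uniformDist_le [DecidableEq α] [DecidableEq β] {S : Finset α}
    (hE : ∀ a, ∃ b, (a, b) ∈ E) (hS : S.Nonempty) :
    sSup (entropyGains E (uniformDist S)) ≤ log #(nbhd E S) - log #S := by
  refine csSup_le (entropyGains_nonempty hE) ?_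
  rintro _ ⟨W, hW, rfl⟩
  have hp := isDist_uniformDist hS
  have hsupp : ∀ b ∉ nbhd E S, outDist (uniformDist S) W b = 0 :=
    fun b => outDist_eq_zero_of_notMem_nbhd hW fun a ha => if_neg ha
  have hsum : ∑ b ∈ nbhd E S, outDist (uniformDist S) W b = 1 := by
    rw [sum_subset (subset_univ _) fun b _ hb => hsupp b hb]
    exact (hp.outDist hW).2
  rw [entDist_uniformDist hS]
  linarith [entDist_le_log_card_of_support (nbhd_nonempty hE hS) (hp.outDist hW).1 hsupp hsum]

end Gain

lemma exists_magRatio_eq {α β : Type*} [Finite α] [Nonempty α] [DecidableEq α] [DecidableEq β]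
    (E : Finset (α × β)) : ∃ S : Finset α, S.Nonempty ∧ magRatio E = #(nbhd E S) / #S := by
  set R := {r : ℝ | ∃ S : Finset α, S.Nonempty ∧ r = #(nbhd E S) / #S}
  have hfin : R.Finite := (Set.finite_range fun S : Finset α => (#(nbhd E S) / #S : ℝ)).subset
    fun _ ⟨S, _, hr⟩ => ⟨S, hr.symm⟩
  obtain ⟨a⟩ := ‹Nonempty α›
  have hne : R.Nonempty := ⟨_, {a}, singleton_nonempty a, rfl⟩
  exact hne.csInf_mem hfin

theorem stmt16_general (E : Finset (A × B))
    (hA : ∀ a : A, ∃ b : B, (a, b) ∈ E) :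
    sInf {r : ℝ | ∃ p : A → ℝ, IsDist p ∧
        r = sSup {s : ℝ | ∃ W : A → B → ℝ, IsChannel E W ∧
              s = entDist (outDist p W) - entDist p}}
      ≤ Real.log (magRatio E) := by
  rcases isEmpty_or_nonempty A with hA₀ | hA₀
  · -- both sides are `sInf ∅ = 0`
    have hp : ∀ p : A → ℝ, ¬IsDist p := fun p hp => by simpa using hp.2
    have hS : ∀ S : Finset A, ¬S.Nonempty := fun _ ⟨a, _⟩ => isEmptyElim a
    simp [magRatio, hp, hS]
  obtain ⟨S, hS, hμ⟩ := exists_magRatio_eq E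
  have hbdd : BddBelow {r : ℝ | ∃ p : A → ℝ, IsDist p ∧ r = sSup (entropyGains E p)} :=
    ⟨_, fun _ ⟨p, hp, hr⟩ => hr ▸ neg_log_card_le_sSup_entropyGains hA hp⟩
  calc _ ≤ sSup (entropyGains E (uniformDist S)) :=
        csInf_le hbdd ⟨_, isDist_uniformDist hS, rfl⟩
    _ ≤ log #(nbhd E S) - log #S := sSup_entropyGains_uniformDist_le hA hS
    _ = log (magRatio E) := by
        rw [hμ, log_div (Nat.cast_ne_zero.2 (nbhd_nonempty hA hS).card_ne_zero)
          (Nat.cast_ne_zero.2 hS.card_ne_zero)]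

/-- The easy direction: `min_{P_X} max_{W ∈ W(E)} (H(Y) - H(X)) ≤ log μ_{A→B}(E)`. -/
theorem stmt16 (E : Finset (A × B))
    (hA : ∀ a : A, ∃ b : B, (a, b) ∈ E) (hB : ∀ b : B, ∃ a : A, (a, b) ∈ E) :
    sInf {r : ℝ | ∃ p : A → ℝ, IsDist p ∧
        r = sSup {s : ℝ | ∃ W : A → B → ℝ, IsChannel E W ∧
              s = entDist (outDist p W) - entDist p}}
      ≤ Real.log (magRatio E) :=
  stmt16_general E hA
end
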